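/- Let r ≥ 1 and n ≥ 1 be integers, a_r a real number, and l ≥ 0 an integer with 2l ≤ n+1. Then A(2l, n) + [𝔄(2l, n), 𝔸_r] = 0, where [·,·] is the Lie bracket of vector fields. (Even case of the lemma on eliminating A-terms by the homological operator of 𝔸_r.) -/

import Mathlib

/-- Monomial `x^a * y^b` for integer exponents, zero if an exponent is negative. -/
noncomputable def M (a b : ℤ) : ℝ × ℝ → ℝ :=
  fun p => if 0 ≤ a ∧ 0 ≤ b then p.1 ^ a.toNat * p.2 ^ b.toNat else 0

/-- The vector field `A(l,k)`. -/
noncomputable def A (l k : ℤ) : ℝ × ℝ → ℝ × ℝ :=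
  fun p => (((k : ℝ) - (l : ℝ) + 1) / ((k : ℝ) + 2) * M (l + 1) (k - l) p,
            -(((l : ℝ) + 1) / ((k : ℝ) + 2)) * M l (k - l + 1) p)

/-- The vector field `B(l,k)`. -/
noncomputable def B (l k : ℤ) : ℝ × ℝ → ℝ × ℝ :=
  fun p => (M (l + 1) (k - l) p, M l (k - l + 1) p)

/-- The scalar monomial function `Z(l,k)`. -/
noncomputable def Z (l k : ℤ) : ℝ × ℝ → ℝ := M l (k - l)

/-- Lie bracket of planar vector fields: `[X,Y](p) = DY(p)(X(p)) - DX(p)(Y(p))`. -/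
noncomputable def lieBracket (X Y : ℝ × ℝ → ℝ × ℝ) : ℝ × ℝ → ℝ × ℝ :=
  fun p => fderiv ℝ Y p (X p) - fderiv ℝ X p (Y p)

/-- Pochhammer-type product `(a)^n_b = a (a+b) (a+2b) ⋯ (a+(n-1)b)`. -/
noncomputable def poch (a b : ℝ) (n : ℕ) : ℝ := ∏ j ∈ Finset.range n, (a + (j : ℝ) * b)

/-- The vector field `𝔸_r = A(1,0) + a_r • A(-1,r)`, i.e. `(a_r y^{r+1}, -x)`. -/
noncomputable def bbA (r : ℤ) (ar : ℝ) : ℝ × ℝ → ℝ × ℝ :=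
  fun p => A 1 0 p + ar • A (-1) r p

/-- The vector field `𝔄(m,n)` used to eliminate A-terms. -/
noncomputable def frakA (r : ℤ) (ar : ℝ) (m n : ℤ) : ℝ × ℝ → ℝ × ℝ :=
  fun p => ∑ i ∈ Finset.range ((m / 2).toNat + 1),
    (-(ar ^ i * poch (m : ℝ) (-2) i * ((n : ℝ) + (i : ℝ) * (r : ℝ) + 2)) /
      (((n : ℝ) + 2) * poch ((n : ℝ) - (m : ℝ) + 2) ((r : ℝ) + 2) (i + 1))) •
    A (m - (2 * (i : ℤ) + 1)) (n + (i : ℤ) * r) p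


/-!
Bracketing with `𝔸_r = (a_r y^{r+1}, -x)` moves `A(l,k)` one step up and one step down:
`[A(l,k), 𝔸_r] = (k-l+1) A(l+1,k) - a_r (l+1)(k+r+2)/(k+2) A(l-1,k+r)`.
The coefficients `c_i` of `𝔄(m,n)` are chosen so that, with `g_i` the same expression as `c_i` but
with the last Pochhammer factor of the denominator removed,
`c_i [A(m-2i-1, n+ir), 𝔸_r] = g_i A(m-2i, n+ir) - g_{i+1} A(m-2i-2, n+(i+1)r)`.
So `[𝔄(m,n), 𝔸_r]` telescopes to `g_0 A(m,n) = -A(m,n)` plus a last term which, for `m = 2l`,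
involves `A(-2, ·) = 0`.
-/

lemma M_of_neg_left {a : ℤ} (b : ℤ) (ha : a < 0) : M a b = 0 := by
  funext p; simp [M]; omega

lemma M_of_neg_right (a : ℤ) {b : ℤ} (hb : b < 0) : M a b = 0 := by
  funext p; simp [M]; omega

@[simp] lemma M_natCast (a b : ℕ) (p : ℝ × ℝ) : M a b p = p.1 ^ a * p.2 ^ b := by
  simp [M]

-- `M` vanishes at negative exponents, so `M a b` with `a < 0` may only merge into a zero `M e f`.
lemma M_mul_M {a b c d e f : ℤ} (he : a + c = e) (hf : b + d = f) (hc : 0 ≤ c) (hd : 0 ≤ d)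
    (ha : 0 ≤ e → 0 ≤ a) (hb : 0 ≤ f → 0 ≤ b) (p : ℝ × ℝ) :
    M a b p * M c d p = M e f p := by
  subst he hf
  by_cases hab : 0 ≤ a ∧ 0 ≤ b
  · obtain ⟨ha, hb⟩ := hab
    lift a to ℕ using ha; lift b to ℕ using hb
    lift c to ℕ using hc; lift d to ℕ using hd
    rw [← Nat.cast_add, ← Nat.cast_add, M_natCast, M_natCast, M_natCast]
    ring
  · rcases not_and_or.mp hab with h | h
    · rw [M_of_neg_left _ (not_le.mp h), M_of_neg_left _ (show a + c < 0 by omega)]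
      simp
    · rw [M_of_neg_right _ (not_le.mp h), M_of_neg_right _ (show b + d < 0 by omega)]
      simp

open ContinuousLinearMap in
noncomputable def dM (a b : ℤ) (p : ℝ × ℝ) : ℝ × ℝ →L[ℝ] ℝ :=
  ((a : ℝ) * M (a - 1) b p) • fst ℝ ℝ ℝ + ((b : ℝ) * M a (b - 1) p) • snd ℝ ℝ ℝ

lemma dM_apply (a b : ℤ) (p v : ℝ × ℝ) :
    dM a b p v = (a : ℝ) * M (a - 1) b p * v.1 + (b : ℝ) * M a (b - 1) p * v.2 := by
  simp [dM]

lemma natCast_mul_M_sub_one_left (a b : ℕ) (p : ℝ × ℝ) :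
    (a : ℝ) * M (a - 1) b p = a * p.1 ^ (a - 1) * p.2 ^ b := by
  cases a with
  | zero => simp
  | succ a => simp [mul_assoc]

lemma natCast_mul_M_sub_one_right (a b : ℕ) (p : ℝ × ℝ) :
    (b : ℝ) * M a (b - 1) p = b * p.1 ^ a * p.2 ^ (b - 1) := by
  cases b with
  | zero => simp
  | succ b => simp; ring

open ContinuousLinearMap in
lemma hasFDerivAt_M (a b : ℤ) (p : ℝ × ℝ) : HasFDerivAt (M a b) (dM a b p) p := by
  by_cases hab : 0 ≤ a ∧ 0 ≤ b
  · obtain ⟨ha, hb⟩ := hab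
    lift a to ℕ using ha; lift b to ℕ using hb
    have hx : HasFDerivAt (fun q : ℝ × ℝ => q.1 ^ a) (((a : ℝ) * p.1 ^ (a - 1)) • fst ℝ ℝ ℝ) p :=
      (hasDerivAt_pow a p.1).comp_hasFDerivAt p hasFDerivAt_fst
    have hy : HasFDerivAt (fun q : ℝ × ℝ => q.2 ^ b) (((b : ℝ) * p.2 ^ (b - 1)) • snd ℝ ℝ ℝ) p :=
      (hasDerivAt_pow b p.2).comp_hasFDerivAt p hasFDerivAt_snd
    rw [show M a b = fun q => q.1 ^ a * q.2 ^ b from funext (M_natCast a b)]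
    refine (hx.mul hy).congr_fderiv ?_
    ext <;> simp [dM, natCast_mul_M_sub_one_left, natCast_mul_M_sub_one_right] <;> ring
  · have hM : M a b = 0 := by
      rcases not_and_or.mp hab with h | h
      · exact M_of_neg_left b (not_le.mp h)
      · exact M_of_neg_right a (not_le.mp h)
    have hdM : dM a b p = 0 := by
      rcases not_and_or.mp hab with h | h
      · simp [dM, M_of_neg_left _ (show a < 0 by omega),
          M_of_neg_left _ (show a - 1 < 0 by omega)]
      · simp [dM, M_of_neg_right _ (show b < 0 by omega),
          M_of_neg_right _ (show b - 1 < 0 by omega)]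
    rw [hM, hdM]
    exact hasFDerivAt_const 0 p

noncomputable def dA (l k : ℤ) (p : ℝ × ℝ) : ℝ × ℝ →L[ℝ] ℝ × ℝ :=
  ((((k : ℝ) - l + 1) / (k + 2)) • dM (l + 1) (k - l) p).prod
    ((-(((l : ℝ) + 1) / (k + 2))) • dM l (k - l + 1) p)

lemma hasFDerivAt_A (l k : ℤ) (p : ℝ × ℝ) : HasFDerivAt (A l k) (dA l k p) p :=
  ((hasFDerivAt_M _ _ p).const_mul _).prodMk ((hasFDerivAt_M _ _ p).const_mul _)

lemma dA_apply (l k : ℤ) (p v : ℝ × ℝ) :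
    dA l k p v =
      (((k : ℝ) - l + 1) / (k + 2) *
          ((l + 1) * M l (k - l) p * v.1 + (k - l) * M (l + 1) (k - l - 1) p * v.2),
        -(((l : ℝ) + 1) / (k + 2)) *
          (l * M (l - 1) (k - l + 1) p * v.1 + (k - l + 1) * M l (k - l) p * v.2)) := by
  simp only [dA, ContinuousLinearMap.prod_apply, smul_apply, dM_apply, smul_eq_mul,
    add_sub_cancel_right]
  push_cast
  rfl

lemma A_of_le_neg_two {l : ℤ} (k : ℤ) (hl : l ≤ -2) : A l k = 0 := by
  funext p
  simp [A, M_of_neg_left _ (show l < 0 by omega), M_of_neg_left _ (show l + 1 < 0 by omega)]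

lemma bbA_eq {r : ℤ} (hr : r ≠ -2) (ar : ℝ) :
    bbA r ar = fun q => (ar * M 0 (r + 1) q, -M 1 0 q) := by
  have hr2 : (r : ℝ) + 2 ≠ 0 := by exact_mod_cast (show r + 2 ≠ 0 by omega)
  funext q
  simp [bbA, A, M_of_neg_left _ (show (-1 : ℤ) < 0 by norm_num)]
  left
  rw [add_assoc, one_add_one_eq_two, div_self hr2, one_mul]

noncomputable def dbbA (r : ℤ) (ar : ℝ) (p : ℝ × ℝ) : ℝ × ℝ →L[ℝ] ℝ × ℝ :=
  (ar • dM 0 (r + 1) p).prod (-dM 1 0 p)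

lemma hasFDerivAt_bbA {r : ℤ} (hr : r ≠ -2) (ar : ℝ) (p : ℝ × ℝ) :
    HasFDerivAt (bbA r ar) (dbbA r ar p) p := by
  rw [bbA_eq hr]
  exact ((hasFDerivAt_M _ _ p).const_mul ar).prodMk (hasFDerivAt_M _ _ p).neg

lemma dbbA_apply (r : ℤ) (ar : ℝ) (p v : ℝ × ℝ) :
    dbbA r ar p v = (ar * (r + 1) * M 0 r p * v.2, -v.1) := by
  have h00 : M 0 0 p = 1 := by simp [M]
  simp [dbbA, dM_apply, h00, mul_assoc]

lemma lieBracket_A_bbA {l k r : ℤ} (hl : -1 ≤ l) (hlk : l ≤ k) (hr : 0 ≤ r) (ar : ℝ)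
    (p : ℝ × ℝ) :
    lieBracket (A l k) (bbA r ar) p =
      ((k : ℝ) - l + 1) • A (l + 1) k p +
        (-(ar * (l + 1) * (k + r + 2) / (k + 2))) • A (l - 1) (k + r) p := by
  have hk : (k : ℝ) + 2 ≠ 0 := by exact_mod_cast (show k + 2 ≠ 0 by omega)
  have hkr : (k : ℝ) + r + 2 ≠ 0 := by exact_mod_cast (show k + r + 2 ≠ 0 by omega)
  have h1 : M l (k - l + 1) p * M 0 r p = M l (k - l + r + 1) p :=
    M_mul_M (by ring) (by ring) le_rfl hr (by omega) (by omega) p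
  have h2 : M l (k - l) p * M 0 (r + 1) p = M l (k - l + r + 1) p :=
    M_mul_M (by ring) (by ring) le_rfl (by omega) (by omega) (by omega) p
  have h3 : M (l + 1) (k - l - 1) p * M 1 0 p = M (l + 2) (k - l - 1) p :=
    M_mul_M (by ring) (by ring) zero_le_one le_rfl (by omega) (by omega) p
  have h4 : M (l - 1) (k - l + 1) p * M 0 (r + 1) p = M (l - 1) (k - l + r + 2) p :=
    M_mul_M (by ring) (by ring) le_rfl (by omega) (by omega) (by omega) p
  -- at `l = -1` the product vanishes but `M 0 (k + 1)` does not; the factor `l + 1` saves this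
  have h5 : ((l : ℝ) + 1) * (M l (k - l) p * M 1 0 p) = (l + 1) * M (l + 1) (k - l) p := by
    rcases (show l = -1 ∨ 0 ≤ l by omega) with rfl | hl
    · norm_num
    · rw [M_mul_M (e := l + 1) (f := k - l) (by ring) (by ring) zero_le_one le_rfl (by omega)
        (by omega) p]
  have hr2 : r ≠ -2 := by omega
  simp only [lieBracket, (hasFDerivAt_A l k p).fderiv, (hasFDerivAt_bbA hr2 ar p).fderiv,
    dA_apply, dbbA_apply]
  rw [bbA_eq hr2]
  simp only [A, Prod.smul_mk, Prod.mk_add_mk, Prod.mk_sub_mk, smul_eq_mul, Prod.mk.injEq]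
  rw [show l + 1 + 1 = l + 2 by ring, show k - (l + 1) + 1 = k - l by ring,
    show k - (l + 1) = k - l - 1 by ring, show l - 1 + 1 = l by ring,
    show k + r - (l - 1) + 1 = k - l + r + 2 by ring, show k + r - (l - 1) = k - l + r + 1 by ring]
  push_cast
  constructor
  · field_simp
    linear_combination -(ar * (r + 1) * (l + 1)) * h1 - ar * (k - l + 1) * (l + 1) * h2
      + (k - l + 1) * (k - l) * h3
  · field_simp
    linear_combination ar * (l + 1) * l * h4 - (k - l + 1) * h5

lemma lieBracket_sum_smul_left {ι : Type*} (s : Finset ι) (c : ι → ℝ) (X : ι → ℝ × ℝ → ℝ × ℝ)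
    (Y : ℝ × ℝ → ℝ × ℝ) (p : ℝ × ℝ) (hX : ∀ i ∈ s, DifferentiableAt ℝ (X i) p) :
    lieBracket (fun q => ∑ i ∈ s, c i • X i q) Y p = ∑ i ∈ s, c i • lieBracket (X i) Y p := by
  have hF : HasFDerivAt (fun q => ∑ i ∈ s, c i • X i q) (∑ i ∈ s, c i • fderiv ℝ (X i) p) p :=
    HasFDerivAt.fun_sum fun i hi => (hX i hi).hasFDerivAt.const_smul (c i)
  simp only [lieBracket, hF.fderiv, map_sum, map_smul, sum_apply, smul_apply, smul_sub,
    Finset.sum_sub_distrib]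

lemma poch_succ (a b : ℝ) (n : ℕ) : poch a b (n + 1) = poch a b n * (a + n * b) :=
  Finset.prod_range_succ _ _

noncomputable def frakCoef (r : ℤ) (ar : ℝ) (m n : ℤ) (i : ℕ) : ℝ :=
  -(ar ^ i * poch (m : ℝ) (-2) i * ((n : ℝ) + (i : ℝ) * (r : ℝ) + 2)) /
      (((n : ℝ) + 2) * poch ((n : ℝ) - (m : ℝ) + 2) ((r : ℝ) + 2) (i + 1))

lemma frakA_eq (r : ℤ) (ar : ℝ) (m n : ℤ) :
    frakA r ar m n = fun p => ∑ i ∈ Finset.range ((m / 2).toNat + 1),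
      frakCoef r ar m n i • A (m - (2 * (i : ℤ) + 1)) (n + (i : ℤ) * r) p :=
  rfl

noncomputable def telescopeCoef (r : ℤ) (ar : ℝ) (m n : ℤ) (i : ℕ) : ℝ :=
  -(ar ^ i * poch (m : ℝ) (-2) i * ((n : ℝ) + (i : ℝ) * (r : ℝ) + 2)) /
      (((n : ℝ) + 2) * poch ((n : ℝ) - (m : ℝ) + 2) ((r : ℝ) + 2) i)

lemma telescopeCoef_zero (r : ℤ) (ar : ℝ) (m : ℤ) {n : ℤ} (hn : (n : ℝ) + 2 ≠ 0) :
    telescopeCoef r ar m n 0 = -1 := by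
  simp only [telescopeCoef, poch, pow_zero, Finset.range_zero, Finset.prod_empty,
    CharP.cast_eq_zero, zero_mul, add_zero, one_mul, mul_one, neg_div, div_self hn]

lemma frakCoef_mul (r : ℤ) (ar : ℝ) (m n : ℤ) (i : ℕ)
    (h : (n : ℝ) - m + 2 + i * (r + 2) ≠ 0) :
    frakCoef r ar m n i * ((n : ℝ) - m + 2 + i * (r + 2)) = telescopeCoef r ar m n i := by
  rw [frakCoef, telescopeCoef, poch_succ, ← mul_assoc, div_mul_eq_mul_div,
    mul_div_mul_right _ _ h]

lemma frakCoef_mul_eq_neg_telescopeCoef_succ (r : ℤ) (ar : ℝ) (m n : ℤ) (i : ℕ)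
    (h : (n : ℝ) + i * r + 2 ≠ 0) :
    frakCoef r ar m n i * (-(ar * (m - 2 * i) * (n + i * r + r + 2) / (n + i * r + 2))) =
      -telescopeCoef r ar m n (i + 1) := by
  rw [frakCoef, telescopeCoef, poch_succ (m : ℝ)]
  by_cases hD : ((n : ℝ) + 2) * poch ((n : ℝ) - m + 2) (r + 2) (i + 1) = 0
  · simp [hD]
  · field_simp
    push_cast
    ring

lemma frakCoef_smul_lieBracket {r m n : ℤ} {i : ℕ} (hr : 0 ≤ r) (hi : 2 * (i : ℤ) ≤ m)
    (hmn : m ≤ n + 1) (ar : ℝ) (p : ℝ × ℝ) :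
    frakCoef r ar m n i • lieBracket (A (m - (2 * i + 1)) (n + i * r)) (bbA r ar) p =
      telescopeCoef r ar m n i • A (m - 2 * i) (n + i * r) p -
        telescopeCoef r ar m n (i + 1) • A (m - 2 * (i + 1 : ℕ)) (n + (i + 1 : ℕ) * r) p := by
  have hir : 0 ≤ (i : ℤ) * r := by positivity
  have hpos₁ : (n : ℝ) - m + 2 + i * (r + 2) ≠ 0 := by
    have : (0 : ℤ) < n - m + 2 + i * (r + 2) := by nlinarith
    exact_mod_cast this.ne'
  have hpos₂ : (n : ℝ) + i * r + 2 ≠ 0 := by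
    exact_mod_cast (show n + i * r + 2 ≠ 0 by omega)
  rw [lieBracket_A_bbA (by omega) (by omega) hr, smul_add, smul_smul, smul_smul]
  have e₁ : ((n + i * r : ℤ) : ℝ) - ((m - (2 * i + 1) : ℤ) : ℝ) + 1 =
      n - m + 2 + i * (r + 2) := by
    push_cast; ring
  have e₂ : -(ar * (((m - (2 * i + 1) : ℤ) : ℝ) + 1) * (((n + i * r : ℤ) : ℝ) + r + 2) /
      (((n + i * r : ℤ) : ℝ) + 2)) =
      -(ar * (m - 2 * i) * (n + i * r + r + 2) / (n + i * r + 2)) := by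
    push_cast; ring
  rw [e₁, e₂, frakCoef_mul r ar m n i hpos₁,
    frakCoef_mul_eq_neg_telescopeCoef_succ r ar m n i hpos₂, neg_smul, ← sub_eq_add_neg,
    show m - (2 * i + 1) + 1 = m - 2 * i by ring,
    show m - (2 * i + 1) - 1 = m - 2 * (i + 1 : ℕ) by push_cast; ring,
    show n + i * r + r = n + (i + 1 : ℕ) * r by push_cast; ring]

theorem stmt4_general (r n : ℤ) (ar : ℝ) (l : ℕ) (hr : 1 ≤ r)
    (hl : 2 * (l : ℤ) ≤ n + 1) :
    (fun p => A (2 * (l : ℤ)) n p + lieBracket (frakA r ar (2 * (l : ℤ)) n) (bbA r ar) p)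
      = fun _ => (0 : ℝ × ℝ) := by
  funext p
  have hn : (n : ℝ) + 2 ≠ 0 := by exact_mod_cast (show n + 2 ≠ 0 by omega)
  rw [frakA_eq, show (2 * (l : ℤ) / 2).toNat = l by omega,
    lieBracket_sum_smul_left _ _ _ _ _ fun i _ => (hasFDerivAt_A _ _ p).differentiableAt,
    Finset.sum_congr rfl fun i hi => frakCoef_smul_lieBracket (by omega)
      (by have := Finset.mem_range.mp hi; omega) hl ar p,
    Finset.sum_range_sub', telescopeCoef_zero r ar _ hn,
    A_of_le_neg_two (l := 2 * l - 2 * (l + 1 : ℕ)) _ (by omega)]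
  simp

/-- Even case: `A(2l,n) + [𝔄(2l,n), 𝔸_r] = 0`. -/
theorem stmt4 (r n : ℤ) (ar : ℝ) (l : ℕ) (hr : 1 ≤ r) (hn : 1 ≤ n)
    (hl : 2 * (l : ℤ) ≤ n + 1) :
    (fun p => A (2 * (l : ℤ)) n p + lieBracket (frakA r ar (2 * (l : ℤ)) n) (bbA r ar) p)
      = fun _ => (0 : ℝ × ℝ) :=
  stmt4_general r n ar l hr hl
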